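/- Let M be a MAGNN and r an ELUQ rule that is sound for M. Then there exists a finite set R of rules such that: (1) every rule r' in R has the form ∃P_1.⊤ ⊓ … ⊓ ∃P_j.⊤ ⊓ A_1 ⊓ … ⊓ A_k ⊓ ⊤ ⊑ A_{k+1}, where each P_i is a binary predicate, each A_i is a unary predicate, and j, k ≥ 0; (2) every rule in R is sound for M; and (3) R subsumes r. -/

import Mathlib

open scoped BigOperators

namespace KG

/-- A fact over a signature with `δ` unary predicates (indexed by `Fin δ`) and
binary predicates indexed by `Col`; constants are natural numbers. -/
inductive Fact (δ : ℕ) (Col : Type) where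
  | unary : Fin δ → ℕ → Fact δ Col
  | binary : Col → ℕ → ℕ → Fact δ Col
deriving DecidableEq

/-- A dataset is a finite set of facts. -/
abbrev Dataset (δ : ℕ) (Col : Type) [DecidableEq Col] := Finset (Fact δ Col)

variable {δ : ℕ} {Col : Type} [DecidableEq Col] [Fintype Col]

/-- The (finite) set of constants occurring in a dataset. -/
def conD (D : Dataset δ Col) : Finset ℕ :=
  D.biUnion fun f =>
    match f with
    | .unary _ a => {a}
    | .binary _ a b => {a, b}

/-- The `P`-successors of `a` in `D`. -/
def nbrs (D : Dataset δ Col) (P : Col) (a : ℕ) : Finset ℕ :=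
  (conD D).filter fun d => Fact.binary P a d ∈ D

/-- A mean-aggregation GNN with `L ≥ 1` layers, over the signature with `δ` unary
predicates and binary predicates `Col`.  `dims ℓ` is the dimension of the layer-`ℓ`
vectors, with `dims 0 = dims L = δ`; `A ℓ` and `B P ℓ` are the matrices and `bias ℓ`
the bias vector used to compute the layer-`(ℓ+1)` vectors; `act ℓ` is the
(monotonically increasing, continuous, non-negatively valued) activation function
applied there, and `t` is the classification threshold. -/
structure GNN (δ : ℕ) (Col : Type) where
  L : ℕ
  hL : 1 ≤ L
  dims : ℕ → ℕ
  dims0 : dims 0 = δ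
  dimsL : dims L = δ
  A : (ℓ : ℕ) → Matrix (Fin (dims (ℓ + 1))) (Fin (dims ℓ)) ℝ
  B : Col → (ℓ : ℕ) → Matrix (Fin (dims (ℓ + 1))) (Fin (dims ℓ)) ℝ
  bias : (ℓ : ℕ) → Fin (dims (ℓ + 1)) → ℝ
  act : ℕ → ℝ → ℝ
  act_mono : ∀ ℓ, Monotone (act ℓ)
  act_cont : ∀ ℓ, Continuous (act ℓ)
  act_nonneg : ∀ ℓ x, 0 ≤ act ℓ x
  t : ℝ

/-- The layer-`ℓ` vector that the GNN `M` assigns to the constant `a` on input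
dataset `D`.  The mean of an empty family is the zero vector (`0 / 0 = 0` in `ℝ`). -/
noncomputable def GNN.val (M : GNN δ Col) (D : Dataset δ Col) :
    (ℓ : ℕ) → ℕ → Fin (M.dims ℓ) → ℝ
  | 0, a, i => if Fact.unary (Fin.cast M.dims0 i) a ∈ D then (1 : ℝ) else 0
  | ℓ + 1, a, i =>
      M.act ℓ (M.bias ℓ i
        + (M.A ℓ).mulVec (fun j => M.val D ℓ a j) i
        + ∑ P : Col, (M.B P ℓ).mulVec
            (fun j => (∑ d ∈ nbrs D P a, M.val D ℓ d j) / ((nbrs D P a).card : ℝ)) i)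

/-- The dataset transformation induced by the GNN `M`:
`T_M(D) = { Uᵢ(a) : a ∈ con(D), v^a_L[i] ≥ t }`. -/
def GNN.T (M : GNN δ Col) (D : Dataset δ Col) : Set (Fact δ Col) :=
  { f | ∃ (A : Fin δ) (a : ℕ), f = Fact.unary A a ∧ a ∈ conD D ∧
      M.t ≤ M.val D M.L a (Fin.cast M.dimsL.symm A) }

/-- A GNN is monotonic (is a MAGNN) if all matrix entries are non-negative. -/
def GNN.Monotonic (M : GNN δ Col) : Prop :=
  (∀ ℓ i j, 0 ≤ M.A ℓ i j) ∧ (∀ P ℓ i j, 0 ≤ M.B P ℓ i j)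

/-- Concepts in the syntax `C ::= ⊤ | A | C ⊓ C' | C ⊔ C' | ≥ₙ P.C`
(`∃P.C` is `≥₁ P.C`); ELUQ concepts are those in which every `≥ₙ` has `n ≥ 1`. -/
inductive Concept (δ : ℕ) (Col : Type) where
  | top : Concept δ Col
  | atom : Fin δ → Concept δ Col
  | and : Concept δ Col → Concept δ Col → Concept δ Col
  | or : Concept δ Col → Concept δ Col → Concept δ Col
  | atLeast : ℕ → Col → Concept δ Col → Concept δ Col
deriving DecidableEq

/-- A concept is a (well-formed) ELUQ concept when every `≥ₙ` has `n` a positive integer. -/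
inductive ELUQ : Concept δ Col → Prop
  | top : ELUQ .top
  | atom (A : Fin δ) : ELUQ (.atom A)
  | and {C₁ C₂} : ELUQ C₁ → ELUQ C₂ → ELUQ (.and C₁ C₂)
  | or {C₁ C₂} : ELUQ C₁ → ELUQ C₂ → ELUQ (.or C₁ C₂)
  | atLeast {C} (n : ℕ) (P : Col) (hn : 1 ≤ n) : ELUQ C → ELUQ (.atLeast n P C)

/-- Satisfaction of a concept by a constant over a dataset. -/
def sat (D : Dataset δ Col) : ℕ → Concept δ Col → Prop
  | _, .top => True
  | c, .atom A => Fact.unary A c ∈ D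
  | c, .and C₁ C₂ => sat D c C₁ ∧ sat D c C₂
  | c, .or C₁ C₂ => sat D c C₁ ∨ sat D c C₂
  | c, .atLeast n P C =>
      ∃ S : Finset ℕ, S.card = n ∧ ∀ d ∈ S, Fact.binary P c d ∈ D ∧ sat D d C

/-- A rule `C ⊑ A`. -/
structure Rule (δ : ℕ) (Col : Type) where
  body : Concept δ Col
  head : Fin δ
deriving DecidableEq

/-- Immediate consequences of a rule on a dataset. -/
def Rule.T (r : Rule δ Col) (D : Dataset δ Col) : Set (Fact δ Col) :=
  { f | ∃ a : ℕ, f = Fact.unary r.head a ∧ a ∈ conD D ∧ sat D a r.body }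

/-- A rule is sound for a GNN if its consequences are always among the GNN's. -/
def Sound (r : Rule δ Col) (M : GNN δ Col) : Prop :=
  ∀ D : Dataset δ Col, r.T D ⊆ M.T D


/-- Conjunction of a list of concepts, ending in `⊤`. -/
def bigAndC : List (Concept δ Col) → Concept δ Col
  | [] => .top
  | C :: rest => .and C (bigAndC rest)

/-- The body `∃P₁.⊤ ⊓ … ⊓ ∃Pⱼ.⊤ ⊓ A₁ ⊓ … ⊓ A_k ⊓ ⊤` determined by a list of binary
predicates `Ps = [P₁,…,Pⱼ]` and a list of unary predicates `As = [A₁,…,A_k]`. -/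
def simpleBody (Ps : List Col) (As : List (Fin δ)) : Concept δ Col :=
  bigAndC (Ps.map (fun P => Concept.atLeast 1 P Concept.top) ++ As.map Concept.atom)

set_option linter.unusedSectionVars false
/-! ### Auxiliary lemmas -/

section Aux

lemma mem_conD_of_unary {D : Dataset δ Col} {A : Fin δ} {a : ℕ}
    (h : Fact.unary A a ∈ D) : a ∈ conD D := by
  refine Finset.mem_biUnion.2 ⟨_, h, ?_⟩
  simp

lemma mem_conD_of_binary_left {D : Dataset δ Col} {P : Col} {a b : ℕ}
    (h : Fact.binary P a b ∈ D) : a ∈ conD D := by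
  refine Finset.mem_biUnion.2 ⟨_, h, ?_⟩
  simp

lemma mem_conD_of_binary_right {D : Dataset δ Col} {P : Col} {a b : ℕ}
    (h : Fact.binary P a b ∈ D) : b ∈ conD D := by
  refine Finset.mem_biUnion.2 ⟨_, h, ?_⟩
  simp

lemma conD_mono {D D' : Dataset δ Col} (h : D ⊆ D') : conD D ⊆ conD D' :=
  Finset.biUnion_subset_biUnion_of_subset_left _ h

lemma mem_nbrs {D : Dataset δ Col} {P : Col} {a d : ℕ} :
    d ∈ nbrs D P a ↔ Fact.binary P a d ∈ D := by
  constructor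
  · intro h; exact (Finset.mem_filter.1 h).2
  · intro h; exact Finset.mem_filter.2 ⟨mem_conD_of_binary_right h, h⟩

lemma sat_mono {D D' : Dataset δ Col} (h : D ⊆ D') :
    ∀ (C : Concept δ Col) (c : ℕ), sat D c C → sat D' c C := by
  intro C
  induction C with
  | top => intro c _; trivial
  | atom A => intro c hc; exact h hc
  | and C₁ C₂ ih₁ ih₂ => intro c hc; exact ⟨ih₁ c hc.1, ih₂ c hc.2⟩
  | or C₁ C₂ ih₁ ih₂ =>
      intro c hc
      rcases hc with hc | hc
      · exact Or.inl (ih₁ c hc)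
      · exact Or.inr (ih₂ c hc)
  | atLeast n P C ih =>
      rintro c ⟨S, hS, hall⟩
      exact ⟨S, hS, fun d hd => ⟨h (hall d hd).1, ih d (hall d hd).2⟩⟩

lemma sat_bigAndC {D : Dataset δ Col} {c : ℕ} :
    ∀ (l : List (Concept δ Col)), sat D c (bigAndC l) ↔ ∀ C ∈ l, sat D c C := by
  intro l
  induction l with
  | nil => simp [bigAndC, sat]
  | cons C rest ih =>
      simp only [bigAndC, sat, ih, List.mem_cons]
      constructor
      · rintro ⟨h1, h2⟩ C' (rfl | hC') 
        · exact h1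
        · exact h2 _ hC'
      · intro h; exact ⟨h _ (Or.inl rfl), fun C' hC' => h _ (Or.inr hC')⟩

lemma sat_simpleBody {D : Dataset δ Col} {c : ℕ} {Ps : List Col} {As : List (Fin δ)} :
    sat D c (simpleBody Ps As) ↔
      (∀ P ∈ Ps, ∃ d, Fact.binary P c d ∈ D) ∧ (∀ A ∈ As, Fact.unary A c ∈ D) := by
  rw [simpleBody, sat_bigAndC]
  constructor
  · intro h
    constructor
    · intro P hP
      have := h _ (List.mem_append_left _ (List.mem_map_of_mem hP))
      obtain ⟨S, hS, hall⟩ := this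
      obtain ⟨d, hd⟩ := Finset.card_pos.1 (hS ▸ Nat.one_pos)
      exact ⟨d, (hall d hd).1⟩
    · intro A hA
      exact h _ (List.mem_append_right _ (List.mem_map_of_mem hA))
  · rintro ⟨h1, h2⟩ C hC
    rcases List.mem_append.1 hC with hC | hC
    · obtain ⟨P, hP, rfl⟩ := List.mem_map.1 hC
      obtain ⟨d, hd⟩ := h1 P hP
      exact ⟨{d}, by simp, by simp [hd, sat]⟩
    · obtain ⟨A, hA, rfl⟩ := List.mem_map.1 hC
      exact h2 A hA

end Aux
section Aux2

lemma mean_nonneg {s : Finset ℕ} {f : ℕ → ℝ} (h : ∀ d ∈ s, 0 ≤ f d) :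
    0 ≤ (∑ d ∈ s, f d) / (s.card : ℝ) :=
  div_nonneg (Finset.sum_nonneg h) (Nat.cast_nonneg _)

lemma le_mean {s : Finset ℕ} {f : ℕ → ℝ} {c : ℝ} (hs : s.Nonempty)
    (h : ∀ d ∈ s, c ≤ f d) : c ≤ (∑ d ∈ s, f d) / (s.card : ℝ) := by
  rw [le_div_iff₀ (by exact_mod_cast Finset.card_pos.2 hs)]
  calc c * (s.card : ℝ) = ∑ _d ∈ s, c := by
        rw [Finset.sum_const, nsmul_eq_mul, mul_comm]
    _ ≤ ∑ d ∈ s, f d := Finset.sum_le_sum h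

lemma mean_le {s : Finset ℕ} {f : ℕ → ℝ} {C : ℝ} (hC : 0 ≤ C)
    (h : ∀ d ∈ s, f d ≤ C) : (∑ d ∈ s, f d) / (s.card : ℝ) ≤ C := by
  rcases s.eq_empty_or_nonempty with rfl | hs
  · simpa using hC
  · rw [div_le_iff₀ (by exact_mod_cast Finset.card_pos.2 hs)]
    calc ∑ d ∈ s, f d ≤ ∑ _d ∈ s, C := Finset.sum_le_sum h
      _ = C * (s.card : ℝ) := by rw [Finset.sum_const, nsmul_eq_mul, mul_comm]

lemma mulVec_mono {n m : ℕ} {A : Matrix (Fin n) (Fin m) ℝ}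
    (hA : ∀ i j, 0 ≤ A i j) {x y : Fin m → ℝ} (hxy : ∀ j, x j ≤ y j) (i : Fin n) :
    A.mulVec x i ≤ A.mulVec y i := by
  simp only [Matrix.mulVec, dotProduct]
  exact Finset.sum_le_sum fun j _ => mul_le_mul_of_nonneg_left (hxy j) (hA i j)

lemma mulVec_nonneg {n m : ℕ} {A : Matrix (Fin n) (Fin m) ℝ}
    (hA : ∀ i j, 0 ≤ A i j) {x : Fin m → ℝ} (hx : ∀ j, 0 ≤ x j) (i : Fin n) :
    0 ≤ A.mulVec x i := by
  simp only [Matrix.mulVec, dotProduct]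
  exact Finset.sum_nonneg fun j _ => mul_nonneg (hA i j) (hx j)

lemma val_zero (M : GNN δ Col) (D : Dataset δ Col) (a : ℕ) (i : Fin (M.dims 0)) :
    M.val D 0 a i = if Fact.unary (Fin.cast M.dims0 i) a ∈ D then (1 : ℝ) else 0 := rfl

lemma val_succ (M : GNN δ Col) (D : Dataset δ Col) (a : ℕ) (ℓ : ℕ)
    (i : Fin (M.dims (ℓ + 1))) :
    M.val D (ℓ + 1) a i =
      M.act ℓ (M.bias ℓ i
        + (M.A ℓ).mulVec (fun j => M.val D ℓ a j) i
        + ∑ P : Col, (M.B P ℓ).mulVec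
            (fun j => (∑ d ∈ nbrs D P a, M.val D ℓ d j) / ((nbrs D P a).card : ℝ)) i) := rfl

lemma val_nonneg (M : GNN δ Col) (D : Dataset δ Col) :
    ∀ (ℓ : ℕ) (a : ℕ) (i : Fin (M.dims ℓ)), 0 ≤ M.val D ℓ a i := by
  intro ℓ
  cases ℓ with
  | zero => intro a i; rw [val_zero]; split <;> norm_num
  | succ ℓ => intro a i; rw [val_succ]; exact M.act_nonneg ℓ _

/-- The "minimal" vector: value of a constant with no atoms and no successors. -/
noncomputable def GNN.w (M : GNN δ Col) : (ℓ : ℕ) → Fin (M.dims ℓ) → ℝ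
  | 0, _ => 0
  | ℓ + 1, i => M.act ℓ (M.bias ℓ i + (M.A ℓ).mulVec (M.w ℓ) i)

lemma w_le_val (M : GNN δ Col) (hM : M.Monotonic) (D : Dataset δ Col) :
    ∀ (ℓ : ℕ) (a : ℕ) (i : Fin (M.dims ℓ)), M.w ℓ i ≤ M.val D ℓ a i := by
  intro ℓ
  induction ℓ with
  | zero => intro a i; exact val_nonneg M D 0 a i
  | succ ℓ ih =>
      intro a i
      rw [val_succ]
      show M.act ℓ _ ≤ M.act ℓ _
      apply M.act_mono
      have h1 : (M.A ℓ).mulVec (M.w ℓ) i ≤ (M.A ℓ).mulVec (fun j => M.val D ℓ a j) i :=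
        mulVec_mono (hM.1 ℓ) (fun j => ih a j) i
      have h2 : (0 : ℝ) ≤ ∑ P : Col, (M.B P ℓ).mulVec
          (fun j => (∑ d ∈ nbrs D P a, M.val D ℓ d j) / ((nbrs D P a).card : ℝ)) i :=
        Finset.sum_nonneg fun P _ =>
          mulVec_nonneg (hM.2 P ℓ) (fun j => mean_nonneg fun d _ => val_nonneg M D ℓ d j) i
      linarith

/-- The value of a constant with no unary atoms and no outgoing edges is `w`. -/
lemma val_eq_w (M : GNN δ Col) (D : Dataset δ Col) (e : ℕ)
    (hU : ∀ A, Fact.unary A e ∉ D) (hB : ∀ P d, Fact.binary P e d ∉ D) :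
    ∀ (ℓ : ℕ) (i : Fin (M.dims ℓ)), M.val D ℓ e i = M.w ℓ i := by
  have hn : ∀ P, nbrs D P e = ∅ := by
    intro P
    ext d
    simp only [Finset.notMem_empty, iff_false]
    intro hd
    exact hB P d (mem_nbrs.1 hd)
  intro ℓ
  induction ℓ with
  | zero =>
      intro i
      rw [val_zero]
      simp [hU, GNN.w]
  | succ ℓ ih =>
      intro i
      rw [val_succ]
      show M.act ℓ _ = _
      have : ∀ P : Col, (M.B P ℓ).mulVec
          (fun j => (∑ d ∈ nbrs D P e, M.val D ℓ d j) / ((nbrs D P e).card : ℝ)) i = 0 := by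
        intro P
        have : (fun j => (∑ d ∈ nbrs D P e, M.val D ℓ d j) / ((nbrs D P e).card : ℝ))
            = fun _ => (0 : ℝ) := by
          funext j; rw [hn P]; simp
        rw [this]
        simp [Matrix.mulVec, dotProduct]
      rw [GNN.w]
      congr 1
      have hA : (M.A ℓ).mulVec (fun j => M.val D ℓ e j) i = (M.A ℓ).mulVec (M.w ℓ) i := by
        congr 1
        funext j
        exact ih j
      rw [Finset.sum_congr rfl fun P _ => this P]
      simp [hA]

/-- Uniform bound on all values at a given layer. -/
lemma val_bound (M : GNN δ Col) (hM : M.Monotonic) :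
    ∀ ℓ : ℕ, ∃ C : ℝ, 0 ≤ C ∧ ∀ (D : Dataset δ Col) (a : ℕ) (i : Fin (M.dims ℓ)),
      M.val D ℓ a i ≤ C := by
  intro ℓ
  induction ℓ with
  | zero =>
      refine ⟨1, zero_le_one, ?_⟩
      intro D a i
      rw [val_zero]
      split <;> norm_num
  | succ ℓ ih =>
      obtain ⟨C, hC0, hC⟩ := ih
      set g : Fin (M.dims (ℓ + 1)) → ℝ := fun i =>
        M.act ℓ (M.bias ℓ i + (M.A ℓ).mulVec (fun _ => C) i
          + ∑ P : Col, (M.B P ℓ).mulVec (fun _ => C) i) with hg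
      refine ⟨∑ i, g i, Finset.sum_nonneg fun i _ => M.act_nonneg ℓ _, ?_⟩
      intro D a i
      have h1 : M.val D (ℓ + 1) a i ≤ g i := by
        rw [val_succ, hg]
        apply M.act_mono
        have hA : (M.A ℓ).mulVec (fun j => M.val D ℓ a j) i ≤ (M.A ℓ).mulVec (fun _ => C) i :=
          mulVec_mono (hM.1 ℓ) (fun j => hC D a j) i
        have hB : ∀ P : Col, (M.B P ℓ).mulVec
            (fun j => (∑ d ∈ nbrs D P a, M.val D ℓ d j) / ((nbrs D P a).card : ℝ)) i
              ≤ (M.B P ℓ).mulVec (fun _ => C) i := by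
          intro P
          exact mulVec_mono (hM.2 P ℓ) (fun j => mean_le hC0 fun d _ => hC D d j) i
        have := Finset.sum_le_sum (fun P (_ : P ∈ Finset.univ) => hB P)
        linarith
      calc M.val D (ℓ + 1) a i ≤ g i := h1
        _ ≤ ∑ i', g i' := Finset.single_le_sum (f := g) (fun i' _ => M.act_nonneg ℓ _) (Finset.mem_univ i)

end Aux2
section Aux3

open Filter Topology

lemma tendsto_mean_aux (k : ℕ) (w C : ℝ) (S : ℕ → ℝ) (hS : ∀ N, |S N| ≤ C) :
    Tendsto (fun N : ℕ => (S N + (N : ℝ) * w) / ((k : ℝ) + (N : ℝ))) atTop (𝓝 w) := by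
  have hden : Tendsto (fun N : ℕ => (k : ℝ) + (N : ℝ)) atTop atTop :=
    Filter.tendsto_atTop_add_const_left _ _ tendsto_natCast_atTop_atTop
  have hzero : Tendsto (fun N : ℕ => (S N - (k : ℝ) * w) / ((k : ℝ) + N)) atTop (𝓝 0) := by
    apply squeeze_zero_norm' (a := fun N : ℕ => (C + (k : ℝ) * |w|) / ((k : ℝ) + N))
    · filter_upwards [Filter.eventually_gt_atTop 0] with N hN
      have hN' : (0 : ℝ) < (N : ℝ) := by exact_mod_cast hN
      have hpos : (0 : ℝ) < (k : ℝ) + N := by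
        have : (0 : ℝ) ≤ (k : ℝ) := Nat.cast_nonneg k
        linarith
      rw [Real.norm_eq_abs, abs_div, abs_of_pos hpos]
      have h1 : |S N - (k : ℝ) * w| ≤ C + (k : ℝ) * |w| := by
        have h2 := abs_add_le (S N) (-((k : ℝ) * w))
        rw [abs_neg, abs_mul, Nat.abs_cast] at h2
        have h3 := hS N
        calc |S N - (k : ℝ) * w| = |S N + -((k : ℝ) * w)| := by ring_nf
          _ ≤ |S N| + (k : ℝ) * |w| := h2
          _ ≤ C + (k : ℝ) * |w| := by linarith
      exact div_le_div_of_nonneg_right h1 hpos.le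
    · exact Filter.Tendsto.div_atTop tendsto_const_nhds hden
  have hmain : Tendsto (fun N : ℕ => w + (S N - (k : ℝ) * w) / ((k : ℝ) + N)) atTop (𝓝 w) := by
    have := (tendsto_const_nhds : Tendsto (fun _ : ℕ => w) atTop (𝓝 w)).add hzero
    simpa using this
  apply hmain.congr'
  filter_upwards [Filter.eventually_gt_atTop 0] with N hN
  have hN' : (0 : ℝ) < (N : ℝ) := by exact_mod_cast hN
  have hpos : ((k : ℝ) + N) ≠ 0 := by
    have : (0 : ℝ) ≤ (k : ℝ) := Nat.cast_nonneg k
    positivity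
  field_simp
  ring

/-- The limit vector for the "simple body" determined by `Ps` and `As`. -/
noncomputable def GNN.u (M : GNN δ Col) (Ps : Finset Col) (As : Finset (Fin δ)) :
    (ℓ : ℕ) → Fin (M.dims ℓ) → ℝ
  | 0, i => if Fin.cast M.dims0 i ∈ As then 1 else 0
  | ℓ + 1, i => M.act ℓ (M.bias ℓ i + (M.A ℓ).mulVec (M.u Ps As ℓ) i
      + ∑ P : Col, if P ∈ Ps then (M.B P ℓ).mulVec (M.w ℓ) i else 0)

lemma u_zero (M : GNN δ Col) (Ps : Finset Col) (As : Finset (Fin δ)) (i : Fin (M.dims 0)) :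
    M.u Ps As 0 i = if Fin.cast M.dims0 i ∈ As then 1 else 0 := rfl

lemma u_succ (M : GNN δ Col) (Ps : Finset Col) (As : Finset (Fin δ)) (ℓ : ℕ)
    (i : Fin (M.dims (ℓ + 1))) :
    M.u Ps As (ℓ + 1) i = M.act ℓ (M.bias ℓ i + (M.A ℓ).mulVec (M.u Ps As ℓ) i
      + ∑ P : Col, if P ∈ Ps then (M.B P ℓ).mulVec (M.w ℓ) i else 0) := rfl

lemma u_le_val (M : GNN δ Col) (hM : M.Monotonic) (Ps : Finset Col) (As : Finset (Fin δ))
    (D : Dataset δ Col) (a : ℕ)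
    (hA : ∀ A ∈ As, Fact.unary A a ∈ D)
    (hP : ∀ P ∈ Ps, (nbrs D P a).Nonempty) :
    ∀ (ℓ : ℕ) (i : Fin (M.dims ℓ)), M.u Ps As ℓ i ≤ M.val D ℓ a i := by
  intro ℓ
  induction ℓ with
  | zero =>
      intro i
      rw [val_zero, u_zero]
      by_cases h : Fin.cast M.dims0 i ∈ As
      · simp [h, hA _ h]
      · simp only [h, if_false]
        split <;> norm_num
  | succ ℓ ih =>
      intro i
      rw [val_succ, u_succ]
      apply M.act_mono
      have hAterm := mulVec_mono (hM.1 ℓ) ih i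
      have hBterm : ∀ P : Col, (if P ∈ Ps then (M.B P ℓ).mulVec (M.w ℓ) i else 0)
          ≤ (M.B P ℓ).mulVec
              (fun j => (∑ d ∈ nbrs D P a, M.val D ℓ d j) / ((nbrs D P a).card : ℝ)) i := by
        intro P
        by_cases h : P ∈ Ps
        · simp only [h, if_true]
          exact mulVec_mono (hM.2 P ℓ)
            (fun j => le_mean (hP P h) fun d _ => w_le_val M hM D ℓ d j) i
        · simp only [h, if_false]
          exact mulVec_nonneg (hM.2 P ℓ)
            (fun j => mean_nonneg fun d _ => val_nonneg M D ℓ d j) i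
      have hsum := Finset.sum_le_sum fun P (_ : P ∈ Finset.univ) => hBterm P
      linarith

end Aux3
section Aux4

open Filter Topology

lemma key_lemma (M : GNN δ Col) (hM : M.Monotonic) (r : Rule δ Col) (hsound : Sound r M)
    (D : Dataset δ Col) (a : ℕ) (ha : a ∈ conD D) (hsat : sat D a r.body) :
    M.t ≤ M.u (Finset.univ.filter fun P : Col => (nbrs D P a).Nonempty)
        (Finset.univ.filter fun A : Fin δ => Fact.unary A a ∈ D)
        M.L (Fin.cast M.dimsL.symm r.head) := by
  classical
  set Ps := Finset.univ.filter fun P : Col => (nbrs D P a).Nonempty with hPs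
  set As := Finset.univ.filter fun A : Fin δ => Fact.unary A a ∈ D with hAs
  set m : ℕ := (conD D).sup id + 1 with hm
  have hlt : ∀ c ∈ conD D, c < m := fun c hc =>
    Nat.lt_succ_of_le (Finset.le_sup (f := id) hc)
  set fresh : ℕ → Finset ℕ := fun N => (Finset.range N).image (fun k => m + k) with hfr
  have fresh_card : ∀ N, (fresh N).card = N := by
    intro N
    rw [hfr]
    rw [Finset.card_image_of_injective _ (fun x y h => by omega)]
    exact Finset.card_range N
  have fresh_not_conD : ∀ N e, e ∈ fresh N → e ∉ conD D := by
    intro N e he hc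
    simp only [hfr, Finset.mem_image, Finset.mem_range] at he
    obtain ⟨k, _, rfl⟩ := he
    have := hlt _ hc
    omega
  set DN : ℕ → Dataset δ Col := fun N =>
    D ∪ Ps.biUnion (fun P => (fresh N).image (fun e => Fact.binary P a e)) with hDN
  have hsub : ∀ N, D ⊆ DN N := fun N => Finset.subset_union_left
  have mem_DN : ∀ N f, f ∈ DN N ↔
      f ∈ D ∨ ∃ P ∈ Ps, ∃ e ∈ fresh N, f = Fact.binary P a e := by
    intro N f
    simp only [hDN, Finset.mem_union, Finset.mem_biUnion, Finset.mem_image, eq_comm]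
  have unary_DN : ∀ N A b, Fact.unary A b ∈ DN N ↔ Fact.unary A b ∈ D := by
    intro N A b
    rw [mem_DN]
    constructor
    · rintro (h | ⟨P, _, e, _, h⟩)
      · exact h
      · simp at h
    · exact Or.inl
  have hdis : ∀ N P, Disjoint (nbrs D P a) (fresh N) := by
    intro N P
    rw [Finset.disjoint_left]
    intro d hd hd'
    exact fresh_not_conD N d hd' (Finset.mem_of_mem_filter d hd)
  have nbrs_DN_mem : ∀ N P, P ∈ Ps → nbrs (DN N) P a = nbrs D P a ∪ fresh N := by
    intro N P hP
    ext d
    rw [Finset.mem_union, mem_nbrs, mem_nbrs, mem_DN]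
    constructor
    · rintro (h | ⟨P', _, e, he, h⟩)
      · exact Or.inl h
      · rw [Fact.binary.injEq] at h
        obtain ⟨rfl, -, rfl⟩ := h
        exact Or.inr he
    · rintro (h | h)
      · exact Or.inl h
      · exact Or.inr ⟨P, hP, d, h, rfl⟩
  have nbrs_DN_not : ∀ N P, P ∉ Ps → nbrs (DN N) P a = ∅ := by
    intro N P hP
    have hempty : nbrs D P a = ∅ := by
      by_contra hne
      exact hP (Finset.mem_filter.2 ⟨Finset.mem_univ P,
        Finset.nonempty_iff_ne_empty.2 hne⟩)
    ext d
    simp only [Finset.notMem_empty, iff_false]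
    intro hd
    rcases (mem_DN N _).1 (mem_nbrs.1 hd) with h | ⟨P', hP', e, he, h⟩
    · have : d ∈ nbrs D P a := mem_nbrs.2 h
      rw [hempty] at this
      exact absurd this (Finset.notMem_empty d)
    · rw [Fact.binary.injEq] at h
      obtain ⟨rfl, -, rfl⟩ := h
      exact hP hP'
  have ha_ne : ∀ N e, e ∈ fresh N → e ≠ a := by
    intro N e he heq
    exact fresh_not_conD N e he (heq ▸ ha)
  have val_fresh : ∀ N e, e ∈ fresh N → ∀ ℓ i, M.val (DN N) ℓ e i = M.w ℓ i := by
    intro N e he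
    apply val_eq_w
    · intro A hA'
      exact fresh_not_conD N e he (mem_conD_of_unary ((unary_DN N A e).1 hA'))
    · intro P d hB
      rcases (mem_DN N _).1 hB with h | ⟨P', _, e', _, h⟩
      · exact fresh_not_conD N e he (mem_conD_of_binary_left h)
      · rw [Fact.binary.injEq] at h
        obtain ⟨-, heq, -⟩ := h
        exact ha_ne N e he heq
  -- the main convergence statement
  have main : ∀ (ℓ : ℕ) (i : Fin (M.dims ℓ)),
      Tendsto (fun N => M.val (DN N) ℓ a i) atTop (𝓝 (M.u Ps As ℓ i)) := by
    intro ℓ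
    induction ℓ with
    | zero =>
        intro i
        have heq : ∀ N, M.val (DN N) 0 a i = M.u Ps As 0 i := by
          intro N
          rw [val_zero, u_zero]
          refine if_congr ?_ rfl rfl
          rw [unary_DN, hAs]
          simp
        exact Tendsto.congr (fun N => (heq N).symm) tendsto_const_nhds
    | succ ℓ ih =>
        intro i
        obtain ⟨C, hC0, hC⟩ := val_bound M hM ℓ
        have harg : Tendsto (fun N => M.bias ℓ i
            + (M.A ℓ).mulVec (fun j => M.val (DN N) ℓ a j) i
            + ∑ P : Col, (M.B P ℓ).mulVec
                (fun j => (∑ d ∈ nbrs (DN N) P a, M.val (DN N) ℓ d j) /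
                  ((nbrs (DN N) P a).card : ℝ)) i) atTop
            (𝓝 (M.bias ℓ i + (M.A ℓ).mulVec (M.u Ps As ℓ) i
              + ∑ P : Col, if P ∈ Ps then (M.B P ℓ).mulVec (M.w ℓ) i else 0)) := by
          refine Tendsto.add (Tendsto.add tendsto_const_nhds ?_) ?_
          · simp only [Matrix.mulVec, dotProduct]
            exact tendsto_finset_sum _ fun j _ => (ih j).const_mul _
          · apply tendsto_finset_sum
            intro P _
            by_cases hPmem : P ∈ Ps
            · simp only [hPmem, if_true]
              have hmean : ∀ j, Tendsto (fun N =>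
                  (∑ d ∈ nbrs (DN N) P a, M.val (DN N) ℓ d j) /
                    ((nbrs (DN N) P a).card : ℝ)) atTop (𝓝 (M.w ℓ j)) := by
                intro j
                have hbound : ∀ N, |∑ d ∈ nbrs D P a, M.val (DN N) ℓ d j|
                    ≤ ((nbrs D P a).card : ℝ) * C := by
                  intro N
                  rw [abs_of_nonneg (Finset.sum_nonneg fun d _ => val_nonneg M _ ℓ d j)]
                  calc ∑ d ∈ nbrs D P a, M.val (DN N) ℓ d j
                      ≤ ∑ _d ∈ nbrs D P a, C := Finset.sum_le_sum fun d _ => hC _ d j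
                    _ = ((nbrs D P a).card : ℝ) * C := by
                        rw [Finset.sum_const, nsmul_eq_mul]
                have hred : ∀ N, (∑ d ∈ nbrs (DN N) P a, M.val (DN N) ℓ d j) /
                    ((nbrs (DN N) P a).card : ℝ)
                    = ((∑ d ∈ nbrs D P a, M.val (DN N) ℓ d j) + (N : ℝ) * M.w ℓ j) /
                      (((nbrs D P a).card : ℝ) + (N : ℝ)) := by
                  intro N
                  rw [nbrs_DN_mem N P hPmem, Finset.sum_union (hdis N P),
                    Finset.card_union_of_disjoint (hdis N P), fresh_card]
                  have hfsum : ∑ d ∈ fresh N, M.val (DN N) ℓ d j = (N : ℝ) * M.w ℓ j := by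
                    rw [Finset.sum_congr rfl fun d hd => val_fresh N d hd ℓ j,
                      Finset.sum_const, fresh_card, nsmul_eq_mul]
                  rw [hfsum]
                  push_cast
                  ring_nf
                exact Tendsto.congr (fun N => (hred N).symm)
                  (tendsto_mean_aux (nbrs D P a).card (M.w ℓ j)
                    (((nbrs D P a).card : ℝ) * C) _ hbound)
              simp only [Matrix.mulVec, dotProduct]
              exact tendsto_finset_sum _ fun j _ => (hmean j).const_mul _
            · simp only [hPmem, if_false]
              have hzero : ∀ N, (M.B P ℓ).mulVec
                  (fun j => (∑ d ∈ nbrs (DN N) P a, M.val (DN N) ℓ d j) /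
                    ((nbrs (DN N) P a).card : ℝ)) i = 0 := by
                intro N
                have : (fun j => (∑ d ∈ nbrs (DN N) P a, M.val (DN N) ℓ d j) /
                    ((nbrs (DN N) P a).card : ℝ)) = fun _ => (0 : ℝ) := by
                  funext j
                  rw [nbrs_DN_not N P hPmem]
                  simp
                rw [this]
                simp [Matrix.mulVec, dotProduct]
              exact Tendsto.congr (fun N => (hzero N).symm) tendsto_const_nhds
        have hcomp := ((M.act_cont ℓ).tendsto _).comp harg
        refine Tendsto.congr (fun N => ?_) hcomp
        rw [val_succ]
        rfl
  -- soundness along the sequence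
  have hstep : ∀ N, M.t ≤ M.val (DN N) M.L a (Fin.cast M.dimsL.symm r.head) := by
    intro N
    have hmem : Fact.unary r.head a ∈ Rule.T r (DN N) :=
      ⟨a, rfl, conD_mono (hsub N) ha, sat_mono (hsub N) _ _ hsat⟩
    obtain ⟨A', a', heq, -, hval⟩ := hsound (DN N) hmem
    rw [Fact.unary.injEq] at heq
    obtain ⟨rfl, rfl⟩ := heq
    exact hval
  exact ge_of_tendsto' (main M.L _) hstep

end Aux4
/-- If `M` is a MAGNN and `r` an ELUQ rule that is sound for `M`,
then there is a finite set `R` of rules, each of the simple form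
`∃P₁.⊤ ⊓ … ⊓ ∃Pⱼ.⊤ ⊓ A₁ ⊓ … ⊓ A_k ⊓ ⊤ ⊑ A_{k+1}`, such that every rule in `R` is
sound for `M` and `R` subsumes `r`. -/
theorem magnn_monotonic_rules (M : GNN δ Col) (hM : M.Monotonic)
    (r : Rule δ Col) (hELUQ : ELUQ r.body) (hsound : Sound r M) :
    ∃ R : Finset (Rule δ Col),
      (∀ r' ∈ R, ∃ (Ps : List Col) (As : List (Fin δ)), r'.body = simpleBody Ps As) ∧
      (∀ r' ∈ R, Sound r' M) ∧
      (∀ D : Dataset δ Col, r.T D ⊆ ⋃ r' ∈ R, Rule.T r' D) := by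
  classical
  refine ⟨((Finset.univ : Finset (Finset Col × Finset (Fin δ))).filter
      (fun p => Sound ⟨simpleBody p.1.toList p.2.toList, r.head⟩ M)).image
      (fun p => ⟨simpleBody p.1.toList p.2.toList, r.head⟩), ?_, ?_, ?_⟩
  · intro r' hr'
    obtain ⟨p, -, rfl⟩ := Finset.mem_image.1 hr'
    exact ⟨p.1.toList, p.2.toList, rfl⟩
  · intro r' hr'
    obtain ⟨p, hp, rfl⟩ := Finset.mem_image.1 hr'
    exact (Finset.mem_filter.1 hp).2
  · intro D f hf
    obtain ⟨a, rfl, ha, hsat⟩ := hf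
    set Ps := Finset.univ.filter fun P : Col => (nbrs D P a).Nonempty with hPs
    set As := Finset.univ.filter fun A : Fin δ => Fact.unary A a ∈ D with hAs
    have hkey := key_lemma M hM r hsound D a ha hsat
    have hsnd : Sound ⟨simpleBody Ps.toList As.toList, r.head⟩ M := by
      intro D' f' hf'
      obtain ⟨a', rfl, ha', hsat'⟩ := hf'
      obtain ⟨hP', hA'⟩ := sat_simpleBody.1 hsat'
      have hA'' : ∀ A ∈ As, Fact.unary A a' ∈ D' := by
        intro A hA
        exact hA' A (Finset.mem_toList.2 hA)
      have hP'' : ∀ P ∈ Ps, (nbrs D' P a').Nonempty := by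
        intro P hP
        obtain ⟨d, hd⟩ := hP' P (Finset.mem_toList.2 hP)
        exact ⟨d, mem_nbrs.2 hd⟩
      have hle := u_le_val M hM Ps As D' a' hA'' hP'' M.L (Fin.cast M.dimsL.symm r.head)
      exact ⟨r.head, a', rfl, ha', le_trans hkey hle⟩
    refine Set.mem_iUnion₂.2 ⟨⟨simpleBody Ps.toList As.toList, r.head⟩, ?_, ?_⟩
    · exact Finset.mem_image.2 ⟨(Ps, As),
        Finset.mem_filter.2 ⟨Finset.mem_univ _, hsnd⟩, rfl⟩
    · refine ⟨a, rfl, ha, ?_⟩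
      rw [sat_simpleBody]
      constructor
      · intro P hP
        obtain ⟨d, hd⟩ := (Finset.mem_filter.1 (Finset.mem_toList.1 hP)).2
        exact ⟨d, mem_nbrs.1 hd⟩
      · intro A hA
        exact (Finset.mem_filter.1 (Finset.mem_toList.1 hA)).2

end KG
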